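/- arXiv:math/0605761 — 9 statements merged into one kernel-verified Lean document; each statement's English description precedes it below -/
import Mathlib

section
/- Let ρ > 0 and let u, v be distinct points of the unit circle in ℂ. Suppose c ∈ ℂ and s > 0 are such that |u − c| = s and |v − c| = s (u and v lie on the circle C with center c and radius s), |c|² = 1 + s² (C is orthogonal to the unit circle, so C ∩ Δ is a hyperbolic geodesic of the Poincaré disc), and |c| = s + tanh(ρ/2) (C is externally tangent to the Euclidean circle of radius tanh(ρ/2) centered at 0, which is the hyperbolic circle of hyperbolic radius ρ about the origin of the disc). Then |u − v| = 2/cosh ρ. -/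
open Real

/-- If `u` and `v` are distinct points of the unit circle lying on a Euclidean circle `C`
(center `c`, radius `s`) that is orthogonal to the unit circle (so that `C ∩ Δ` is a
hyperbolic geodesic of the Poincaré disc) and externally tangent to the Euclidean circle of
radius `tanh (ρ/2)` about `0` (the hyperbolic circle of hyperbolic radius `ρ` about the
origin), then `|u - v| = 2 / cosh ρ`. -/
theorem dist_endpoints_of_tangent_geodesic (ρ : ℝ) (hρ : 0 < ρ) (u v c : ℂ) (s : ℝ)
    (huv : u ≠ v) (hu : ‖u‖ = 1) (hv : ‖v‖ = 1) (hs : 0 < s)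
    (huc : ‖u - c‖ = s) (hvc : ‖v - c‖ = s)
    (horth : ‖c‖ ^ 2 = 1 + s ^ 2)
    (htan : ‖c‖ = s + Real.tanh (ρ / 2)) :
    ‖u - v‖ = 2 / Real.cosh ρ := by
  obtain ⟨t, ht⟩ : ∃ t, Real.tanh (ρ / 2) = t := ⟨_, rfl⟩
  rw [ht] at htan
  have hρ2 : 0 < ρ / 2 := by linarith
  have ht0 : 0 < t := by
    rw [← ht, Real.tanh_eq_sinh_div_cosh]
    exact div_pos (Real.sinh_pos_iff.2 hρ2) (Real.cosh_pos _)
  have ht1 : t < 1 := by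
    rw [← ht, Real.tanh_eq_sinh_div_cosh]
    rw [div_lt_one (Real.cosh_pos _)]
    exact Real.sinh_lt_cosh _
  -- cosh ρ in terms of t
  have hcoshpos : 0 < Real.cosh ρ := Real.cosh_pos ρ
  have hcosh : Real.cosh ρ * (1 - t ^ 2) = 1 + t ^ 2 := by
    have hc := Real.cosh_pos (ρ / 2)
    have hsq : Real.cosh (ρ/2) ^ 2 - Real.sinh (ρ/2) ^ 2 = 1 := Real.cosh_sq_sub_sinh_sq _
    have h2 : Real.cosh ρ = 2 * Real.cosh (ρ/2) ^ 2 - 1 := by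
      have h := Real.cosh_two_mul (ρ/2)
      rw [show 2 * (ρ/2) = ρ by ring] at h
      linarith
    have htb : t * Real.cosh (ρ/2) = Real.sinh (ρ/2) := by
      rw [← ht, Real.tanh_eq_sinh_div_cosh]; field_simp
    have ht2 : t ^ 2 * Real.cosh (ρ/2) ^ 2 = Real.cosh (ρ/2) ^ 2 - 1 := by
      linear_combination (t * Real.cosh (ρ/2) + Real.sinh (ρ/2)) * htb - hsq
    rw [h2]
    linear_combination (-2 : ℝ) * ht2
  -- basic facts about c
  have hcabs : ‖c‖ = s + t := htan
  have hcpos : 0 < ‖c‖ := by rw [hcabs]; linarith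
  have hc0 : c ≠ 0 := by
    intro h; rw [h] at hcpos; simp at hcpos
  have hst : 2 * s * t + t ^ 2 = 1 := by nlinarith [horth, hcabs]
  -- normSq facts
  have nsu : Complex.normSq u = 1 := by rw [← Complex.sq_norm, hu]; norm_num
  have nsv : Complex.normSq v = 1 := by rw [← Complex.sq_norm, hv]; norm_num
  have nsc : Complex.normSq c = 1 + s ^ 2 := by rw [← Complex.sq_norm, horth]
  have hreu : (u * starRingEnd ℂ c).re = 1 := by
    have h1 : Complex.normSq (u - c) = s ^ 2 := by rw [← Complex.sq_norm, huc]
    rw [Complex.normSq_sub, nsu, nsc] at h1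
    linarith
  have hrev : (v * starRingEnd ℂ c).re = 1 := by
    have h1 : Complex.normSq (v - c) = s ^ 2 := by rw [← Complex.sq_norm, hvc]
    rw [Complex.normSq_sub, nsv, nsc] at h1
    linarith
  have himu : (u * starRingEnd ℂ c).im ^ 2 = s ^ 2 := by
    have h1 : Complex.normSq (u * starRingEnd ℂ c) = 1 + s ^ 2 := by
      rw [map_mul, Complex.normSq_conj, nsu, nsc]; ring
    rw [Complex.normSq_apply, hreu] at h1
    nlinarith
  have himv : (v * starRingEnd ℂ c).im ^ 2 = s ^ 2 := by
    have h1 : Complex.normSq (v * starRingEnd ℂ c) = 1 + s ^ 2 := by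
      rw [map_mul, Complex.normSq_conj, nsv, nsc]; ring
    rw [Complex.normSq_apply, hrev] at h1
    nlinarith
  have hconjne : starRingEnd ℂ c ≠ 0 := (map_ne_zero _).2 hc0
  have hne : (u * starRingEnd ℂ c).im ≠ (v * starRingEnd ℂ c).im := by
    intro h
    apply huv
    have heq : u * starRingEnd ℂ c = v * starRingEnd ℂ c :=
      Complex.ext (by rw [hreu, hrev]) h
    exact mul_right_cancel₀ hconjne heq
  have hsum : (u * starRingEnd ℂ c).im + (v * starRingEnd ℂ c).im = 0 := by
    have hfac : ((u * starRingEnd ℂ c).im - (v * starRingEnd ℂ c).im) *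
        ((u * starRingEnd ℂ c).im + (v * starRingEnd ℂ c).im) = 0 := by
      linear_combination himu - himv
    rcases mul_eq_zero.1 hfac with h | h
    · exact absurd (by linarith) hne
    · exact h
  have hdiffsq : ((u - v) * starRingEnd ℂ c).im ^ 2 = 4 * s ^ 2 := by
    have : ((u - v) * starRingEnd ℂ c).im =
        (u * starRingEnd ℂ c).im - (v * starRingEnd ℂ c).im := by
      rw [sub_mul, Complex.sub_im]
    rw [this]
    linear_combination 3 * himu + himv - 2 * (u * starRingEnd ℂ c).im * hsum
  have hdiffre : ((u - v) * starRingEnd ℂ c).re = 0 := by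
    have : ((u - v) * starRingEnd ℂ c).re =
        (u * starRingEnd ℂ c).re - (v * starRingEnd ℂ c).re := by
      rw [sub_mul, Complex.sub_re]
    rw [this, hreu, hrev]; ring
  have habs : ‖u - v‖ * ‖c‖ = 2 * s := by
    have h1 : (‖(u - v) * starRingEnd ℂ c‖) ^ 2 = (2 * s) ^ 2 := by
      rw [Complex.sq_norm, Complex.normSq_apply, hdiffre]
      linear_combination hdiffsq
    have h2 : ‖(u - v) * starRingEnd ℂ c‖ = 2 * s := by
      have hnn : 0 ≤ ‖(u - v) * starRingEnd ℂ c‖ := norm_nonneg _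
      have hfac2 : (‖(u - v) * starRingEnd ℂ c‖ - 2 * s) *
          (‖(u - v) * starRingEnd ℂ c‖ + 2 * s) = 0 := by
        linear_combination h1
      rcases mul_eq_zero.1 hfac2 with h | h
      · linarith
      · linarith
    rw [← h2, norm_mul, Complex.norm_conj]
  rw [hcabs] at habs
  have ht2lt : t ^ 2 < 1 := by
    have h := pow_lt_pow_left₀ ht1 ht0.le two_ne_zero
    simpa using h
  have hden : (1 : ℝ) - t ^ 2 ≠ 0 := by
    have hpos : (0 : ℝ) < 1 - t ^ 2 := by linarith
    exact hpos.ne'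
  rw [eq_div_iff hcoshpos.ne']
  have hstpos : 0 < s + t := by linarith
  have habs2 : ‖u - v‖ = 2 * s / (s + t) := by
    rw [eq_div_iff hstpos.ne']; linarith [habs]
  rw [habs2, div_mul_eq_mul_div, div_eq_iff hstpos.ne']
  have h3 : (2 * s * Real.cosh ρ) * (1 - t ^ 2) = (2 * (s + t)) * (1 - t ^ 2) := by
    linear_combination 2 * s * hcosh + 2 * t * hst
  have h4 := mul_right_cancel₀ hden h3
  linarith
end

section
/- Let ρ > 0 and x > 0, and set w₀ = W_ρ(x) = (x·sinh ρ − 1)/(x + sinh ρ). Then w₀ lies in the interval [−1/x, x), and for every w ∈ [−1/x, x), the geodesic γ(x,w) is tangent to the closed hyperbolic ball of radius ρ about i — that is, D(x,w) = ρ — if and only if w = w₀. -/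
open Real MeasureTheory

/-- The geodesic of the upper half-plane with endpoints `x` and `y` at infinity:
the Euclidean semicircle with center `(x+y)/2` and radius `|x-y|/2`. -/
def geodesicUHP (x y : ℝ) : Set UpperHalfPlane :=
  {w : UpperHalfPlane | ‖(w : ℂ) - (((x + y) / 2 : ℝ) : ℂ)‖ = |x - y| / 2}

/-- The hyperbolic distance from the point `i` of the upper half-plane to the geodesic
with endpoints `x`, `y` at infinity. -/
noncomputable def D (x y : ℝ) : ℝ :=
  Metric.infDist UpperHalfPlane.I (geodesicUHP x y)

lemma cosh_inj_nonneg {a b : ℝ} (ha : 0 ≤ a) (hb : 0 ≤ b) (h : Real.cosh a = Real.cosh b) :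
    a = b := by
  have h1 : |a| ≤ |b| := Real.cosh_le_cosh.1 h.le
  have h2 : |b| ≤ |a| := Real.cosh_le_cosh.1 h.ge
  rw [abs_of_nonneg ha, abs_of_nonneg hb] at h1 h2
  linarith

lemma aux_e1 (c r A B K : ℝ) (hApos : 0 < A)
    (hA : A = c^2 + r^2 + 1) (hB : B = 2*c*r) (hK2' : K^2 = A^2 - B^2) :
    (0 - (c - r*B/A))^2 + 1^2 + (r*K/A)^2 = K^2/A := by
  have hAne : A ≠ 0 := ne_of_gt hApos
  subst hA hB
  field_simp
  linear_combination (r^2 - (c^2+r^2+1)) * hK2'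

lemma aux_e2 (c r A B K : ℝ) (hApos : 0 < A)
    (hA : A = c^2 + r^2 + 1) (hB : B = 2*c*r) (hK2' : K^2 = A^2 - B^2) :
    (-(r*B/A))^2 + (r*K/A)^2 = r^2 := by
  have hAne : A ≠ 0 := ne_of_gt hApos
  subst hA hB
  field_simp
  linear_combination r^2 * hK2'

lemma aux_main (A B K r t b : ℝ) (hK2' : K^2 = A^2 - B^2) (hzsq : t^2 + b^2 = r^2)
    (hKnn : 0 ≤ K) (hbnn : 0 ≤ b) (hArBt : 0 ≤ A*r + B*t) : K*b ≤ A*r + B*t := by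
  nlinarith [sq_nonneg (A*t + B*r), mul_nonneg hKnn hbnn, sq_nonneg b]

lemma aux_pos (A B r t : ℝ) (hApB : 0 ≤ A + B) (hAmB : 0 ≤ A - B) (hrpt : 0 ≤ r + t)
    (hrmt : 0 ≤ r - t) : 0 ≤ A*r + B*t := by
  nlinarith [mul_nonneg hApB hrpt, mul_nonneg hAmB hrmt]

set_option maxHeartbeats 1000000 in
lemma coshD_eq (x w : ℝ) (h : w < x) :
    Real.cosh (D x w) = Real.sqrt ((x^2+1)*(w^2+1)) / (x - w) := by
  obtain ⟨c, hc⟩ : ∃ c : ℝ, c = (x+w)/2 := ⟨_, rfl⟩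
  obtain ⟨r, hrr⟩ : ∃ r : ℝ, r = (x-w)/2 := ⟨_, rfl⟩
  have hr : 0 < r := by rw [hrr]; linarith
  obtain ⟨A, hA⟩ : ∃ A : ℝ, A = c^2 + r^2 + 1 := ⟨_, rfl⟩
  obtain ⟨B, hB⟩ : ∃ B : ℝ, B = 2*c*r := ⟨_, rfl⟩
  have hApos : 0 < A := by rw [hA]; positivity
  obtain ⟨K, hK⟩ : ∃ K : ℝ, K = Real.sqrt ((x^2+1)*(w^2+1)) := ⟨_, rfl⟩
  have hP : (0:ℝ) < (x^2+1)*(w^2+1) := by positivity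
  have hKpos : 0 < K := hK ▸ Real.sqrt_pos.2 hP
  have hK2 : K^2 = (x^2+1)*(w^2+1) := by rw [hK]; exact Real.sq_sqrt hP.le
  have hK2' : K^2 = A^2 - B^2 := by rw [hK2, hA, hB, hc, hrr]; ring
  have hV1 : 2*r ≤ K := by
    have h1 : (2*r)^2 ≤ K^2 := by
      rw [hK2, hrr]; nlinarith [sq_nonneg (x*w+1)]
    calc 2*r = Real.sqrt ((2*r)^2) := (Real.sqrt_sq (by linarith)).symm
      _ ≤ Real.sqrt (K^2) := Real.sqrt_le_sqrt h1
      _ = K := Real.sqrt_sq hKpos.le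
  obtain ⟨V, hV⟩ : ∃ V : ℝ, V = K / (2*r) := ⟨_, rfl⟩
  have hVpos : 0 < V := by rw [hV]; positivity
  have hV1' : 1 ≤ V := by rw [hV]; exact (one_le_div (by linarith)).2 hV1
  obtain ⟨d₀, hd0⟩ : ∃ d : ℝ, d = Real.arsinh (Real.sqrt (V^2 - 1)) := ⟨_, rfl⟩
  have hd0nn : 0 ≤ d₀ := hd0 ▸ Real.arsinh_nonneg_iff.2 (Real.sqrt_nonneg _)
  have hcosh_d0 : Real.cosh d₀ = V := by
    have hVsq : (1:ℝ) ≤ V^2 := by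
      calc (1:ℝ) = 1^2 := by norm_num
        _ ≤ V^2 := pow_le_pow_left₀ zero_le_one hV1' 2
    rw [hd0, Real.cosh_arsinh, Real.sq_sqrt (by linarith : (0:ℝ) ≤ V^2 - 1),
      add_sub_cancel, Real.sqrt_sq hVpos.le]
  -- the tangency point
  have him : 0 < r*K/A := by positivity
  obtain ⟨zs, hcoe⟩ : ∃ z : UpperHalfPlane,
      (z : ℂ) = ((c - r*B/A : ℝ) : ℂ) + ((r*K/A : ℝ) : ℂ) * Complex.I :=
    ⟨⟨((c - r*B/A : ℝ) : ℂ) + ((r*K/A : ℝ) : ℂ) * Complex.I, by simpa using him⟩, rfl⟩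
  have hzsre : zs.re = c - r*B/A := by
    rw [← UpperHalfPlane.coe_re, hcoe]; simp
  have hzsim : zs.im = r*K/A := by
    rw [← UpperHalfPlane.coe_im, hcoe]; simp
  have hnsq : Complex.normSq ((zs : ℂ) - (((x + w) / 2 : ℝ) : ℂ)) = r^2 := by
    rw [Complex.normSq_apply, Complex.sub_re, Complex.sub_im,
      Complex.ofReal_re, Complex.ofReal_im,
      UpperHalfPlane.coe_re, UpperHalfPlane.coe_im, hzsre, hzsim, ← hc]
    have h5 := aux_e2 c r A B K hApos hA hB hK2'
    linear_combination h5
  have hmem : zs ∈ geodesicUHP x w := by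
    simp only [geodesicUHP, Set.mem_setOf_eq]
    rw [abs_of_pos (by linarith : (0:ℝ) < x - w), ← hrr,
      ← Real.sqrt_sq hr.le, ← hnsq, Complex.norm_def]
  have hIre : UpperHalfPlane.I.re = 0 := rfl
  have hIim : UpperHalfPlane.I.im = 1 := rfl
  have hdist : dist UpperHalfPlane.I zs = d₀ := by
    apply cosh_inj_nonneg dist_nonneg hd0nn
    rw [UpperHalfPlane.cosh_dist', hIre, hIim, hzsim, hzsre, hcosh_d0,
      aux_e1 c r A B K hApos hA hB hK2', hV]
    rw [div_eq_div_iff (by positivity) (by positivity)]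
    field_simp
  -- lower bound
  have hlb : ∀ z ∈ geodesicUHP x w, d₀ ≤ dist UpperHalfPlane.I z := by
    intro z hz
    simp only [geodesicUHP, Set.mem_setOf_eq] at hz
    rw [abs_of_pos (by linarith : (0:ℝ) < x - w)] at hz
    obtain ⟨t, ht⟩ : ∃ t : ℝ, t = z.re - c := ⟨_, rfl⟩
    obtain ⟨b, hb2⟩ : ∃ b : ℝ, b = z.im := ⟨_, rfl⟩
    have hbpos : 0 < b := by rw [hb2]; exact z.im_pos
    have hzsq : t^2 + b^2 = r^2 := by
      have h2 := congrArg (· ^ 2) hz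
      rw [Complex.sq_norm, Complex.normSq_apply, Complex.sub_re, Complex.sub_im,
        Complex.ofReal_re, Complex.ofReal_im, ← hc, ← hrr,
        UpperHalfPlane.coe_re, UpperHalfPlane.coe_im] at h2
      rw [ht, hb2]
      linear_combination h2
    have key : V ≤ Real.cosh (dist UpperHalfPlane.I z) := by
      rw [UpperHalfPlane.cosh_dist', hIre, hIim, ← hb2,
        show z.re = t + c by rw [ht]; ring]
      rw [hV, div_le_div_iff₀ (by linarith) (by positivity)]
      have htr : t^2 ≤ r^2 := by linarith [sq_nonneg b, hzsq]
      have hApB : 0 ≤ A + B := by rw [hA, hB]; linarith [sq_nonneg (c+r)]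
      have hAmB : 0 ≤ A - B := by rw [hA, hB]; linarith [sq_nonneg (c-r)]
      have habs : |t| ≤ r := by
        calc |t| = Real.sqrt (t^2) := (Real.sqrt_sq_eq_abs t).symm
          _ ≤ Real.sqrt (r^2) := Real.sqrt_le_sqrt htr
          _ = r := Real.sqrt_sq hr.le
      obtain ⟨habs1, habs2⟩ := abs_le.mp habs
      have hrpt : 0 ≤ r + t := by linarith
      have hrmt : 0 ≤ r - t := by linarith
      have hArBt : 0 ≤ A*r + B*t := aux_pos A B r t hApB hAmB hrpt hrmt
      have hmain : K*b ≤ A*r + B*t := aux_main A B K r t b hK2' hzsq hKpos.le hbpos.le hArBt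
      have hnum2 : (0 - (t+c))^2 + 1^2 + b^2 = A + 2*c*t := by
        rw [hA]; linear_combination hzsq
      rw [hnum2]
      have hBt : B*t = 2*c*r*t := by rw [hB]
      linarith [hmain, hBt]
    have h3 : Real.cosh d₀ ≤ Real.cosh (dist UpperHalfPlane.I z) := hcosh_d0 ▸ key
    have h4 := Real.cosh_le_cosh.1 h3
    rwa [abs_of_nonneg hd0nn, abs_of_nonneg dist_nonneg] at h4
  -- conclude infDist = d₀
  have hDeq : D x w = d₀ := by
    refine le_antisymm (hdist ▸ Metric.infDist_le_dist_of_mem hmem) ?_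
    by_contra hcon
    push_neg at hcon
    obtain ⟨y, hy, hylt⟩ := (Metric.infDist_lt_iff ⟨zs, hmem⟩).1 hcon
    exact absurd (hlb y hy) (by linarith)
  rw [hDeq, hcosh_d0, hV, hK, hrr]
  rw [show 2 * ((x-w)/2) = x - w by ring]

/-- For `ρ > 0` and `x > 0`, the point `w₀ = (x sinh ρ - 1)/(x + sinh ρ)` lies in
`[-1/x, x)`, and among `w ∈ [-1/x, x)` the geodesic `γ(x,w)` is tangent to the closed
hyperbolic ball of radius `ρ` about `i` (i.e. `D x w = ρ`) iff `w = w₀`. -/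
theorem tangent_point_pos (ρ x : ℝ) (hρ : 0 < ρ) (hx : 0 < x) :
    (x * Real.sinh ρ - 1) / (x + Real.sinh ρ) ∈ Set.Ico (-1 / x) x ∧
      ∀ w ∈ Set.Ico (-1 / x) x,
        (D x w = ρ ↔ w = (x * Real.sinh ρ - 1) / (x + Real.sinh ρ)) := by
  have hs : 0 < Real.sinh ρ := Real.sinh_pos_iff.2 hρ
  set s : ℝ := Real.sinh ρ with hsdef
  have hxs : 0 < x + s := by linarith
  have hmem : (x * s - 1) / (x + s) ∈ Set.Ico (-1 / x) x := by
    constructor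
    · rw [div_le_div_iff₀ hx hxs]
      nlinarith [mul_pos hs (show (0:ℝ) < x^2 + 1 by positivity)]
    · rw [div_lt_iff₀ hxs]
      nlinarith [sq_nonneg x]
  refine ⟨hmem, fun w hw => ?_⟩
  obtain ⟨hw1, hw2⟩ := hw
  have hxw : 0 < x - w := by linarith
  have hcosh := coshD_eq x w hw2
  have hDnn : 0 ≤ D x w := Metric.infDist_nonneg
  have hc2 : Real.cosh ρ ^ 2 = s^2 + 1 := by rw [Real.cosh_sq]
  have hcposr : 0 < Real.cosh ρ := Real.cosh_pos ρ
  have hxw1 : 0 ≤ x*w + 1 := by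
    rw [div_le_iff₀ hx] at hw1
    nlinarith [hw1]
  constructor
  · intro hD
    have h1 : Real.sqrt ((x^2+1)*(w^2+1)) / (x-w) = Real.cosh ρ := by rw [← hcosh, hD]
    have h2 : Real.sqrt ((x^2+1)*(w^2+1)) = Real.cosh ρ * (x-w) :=
      (div_eq_iff (ne_of_gt hxw)).1 h1
    have h3 : (x^2+1)*(w^2+1) = Real.cosh ρ ^2 * (x-w)^2 := by
      have h4 := congrArg (·^2) h2
      rw [Real.sq_sqrt (by positivity : (0:ℝ) ≤ (x^2+1)*(w^2+1))] at h4
      rw [h4]; ring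
    have hfac : ((x+s)*w - (x*s-1)) * ((s-x)*w - (x*s+1)) = 0 := by
      linear_combination (-1)*h3 - (x-w)^2 * hc2
    rcases mul_eq_zero.mp hfac with h4 | h4
    · rw [eq_div_iff (ne_of_gt hxs)]
      linear_combination h4
    · exfalso
      have h5 : (s-x)*(x-w) = -(x^2+1) := by linear_combination (-1)*h4
      have hsx : s - x < 0 := by nlinarith [h5, hxw, sq_nonneg x]
      have h6 : (s-x)*(x*w+1) = s*(x^2+1) := by linear_combination x*h4
      have h7 : (s-x)*(x*w+1) ≤ 0 := mul_nonpos_iff.mpr (Or.inr ⟨hsx.le, hxw1⟩)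
      nlinarith [mul_pos hs (show (0:ℝ) < x^2+1 by positivity)]
  · intro hw0
    apply cosh_inj_nonneg hDnn hρ.le
    rw [hcosh]
    have hkey : (x^2+1)*(w^2+1) = (Real.cosh ρ * (x-w))^2 := by
      rw [mul_pow, hc2, hw0]
      field_simp
      ring
    rw [hkey, Real.sqrt_sq (by positivity : (0:ℝ) ≤ Real.cosh ρ * (x-w)),
      mul_div_assoc, div_self (ne_of_gt hxw), mul_one]
end

section
/- Let ρ > 0 and x < 0, and set w₀ = −W_ρ(−x) = −((−x)·sinh ρ − 1)/((−x) + sinh ρ). Then w₀ lies in the interval (x, −1/x], and for every w ∈ (x, −1/x], the geodesic γ(x,w) is tangent to the closed hyperbolic ball of radius ρ about i — that is, D(x,w) = ρ — if and only if w = w₀. -/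
open Real MeasureTheory

set_option maxHeartbeats 1000000

lemma D_eq_arsinh (x w : ℝ) (hxw : x < w) (hq : 0 ≤ x * w + 1) :
    D x w = Real.arsinh ((x * w + 1) / (w - x)) := by
  set c : ℝ := (x + w) / 2 with hc
  set r : ℝ := (w - x) / 2 with hrdef
  have hr : 0 < r := by simp [hrdef]; linarith
  set q : ℝ := (x * w + 1) / (w - x) with hqdef
  have hq0 : 0 ≤ q := div_nonneg hq (by linarith)
  set A : ℝ := c ^ 2 + r ^ 2 + 1 with hA
  have hApos : 0 < A := by positivity
  have hid : A ^ 2 - 4 * c ^ 2 * r ^ 2 = (x * w + 1) ^ 2 + (w - x) ^ 2 := by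
    simp only [hA, hc, hrdef]; ring
  set T : ℝ := Real.sqrt (A ^ 2 - 4 * c ^ 2 * r ^ 2) with hT
  have hT2 : T ^ 2 = A ^ 2 - 4 * c ^ 2 * r ^ 2 := by
    rw [hT, Real.sq_sqrt]; rw [hid]; positivity
  have hT0 : 0 < T := by
    rw [hT]; apply Real.sqrt_pos.2; rw [hid]; nlinarith
  clear_value c r q A T
  -- cosh of the target value
  have hcoshq : Real.cosh (Real.arsinh q) = T / (2 * r) := by
    rw [Real.cosh_arsinh]
    rw [show 1 + q ^ 2 = (T / (2 * r)) ^ 2 by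
      have hne : w - x ≠ 0 := by linarith
      rw [div_pow T (2 * r), hT2, hid, hqdef, hrdef]; field_simp; ring]
    exact Real.sqrt_sq (by positivity)
  -- membership characterization
  have hmem : ∀ p : UpperHalfPlane, p ∈ geodesicUHP x w ↔
      ((p : ℂ).re - c) ^ 2 + (p : ℂ).im ^ 2 = r ^ 2 := by
    intro p
    have habs : |x - w| = 2 * r := by rw [abs_of_neg (by linarith : x - w < 0)]; simp [hrdef]; ring
    constructor
    · intro hp
      have := congrArg (· ^ 2) hp
      simp only [Complex.sq_norm, Complex.normSq_apply, Complex.sub_re, Complex.sub_im,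
        Complex.ofReal_re, Complex.ofReal_im, habs] at this
      rw [← hc] at this
      nlinarith [this]
    · intro h
      show ‖_‖ = _
      rw [Complex.norm_def, Complex.normSq_apply]
      simp only [Complex.sub_re, Complex.sub_im, Complex.ofReal_re, Complex.ofReal_im, ← hc]
      rw [habs, show ((p:ℂ).re - c) * ((p:ℂ).re - c) + ((p:ℂ).im - 0) * ((p:ℂ).im - 0)
        = r ^ 2 by nlinarith [h]]
      rw [Real.sqrt_sq hr.le]; ring
  -- cosh of distance from I
  have hcoshd : ∀ p : UpperHalfPlane, Real.cosh (dist UpperHalfPlane.I p)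
      = (1 + ((p : ℂ).re ^ 2 + (1 - (p : ℂ).im) ^ 2) / (2 * (p : ℂ).im)) := by
    intro p
    rw [UpperHalfPlane.cosh_dist]
    rw [Complex.dist_eq, Complex.sq_norm, Complex.normSq_apply]
    simp [UpperHalfPlane.coe_I, Complex.sub_re, Complex.sub_im, UpperHalfPlane.I_im,
      UpperHalfPlane.coe_im]
    ring_nf
  -- lower bound
  have hlow : ∀ p ∈ geodesicUHP x w, Real.arsinh q ≤ dist UpperHalfPlane.I p := by
    intro p hp
    rw [hmem] at hp
    set u : ℝ := (p : ℂ).re - c with hu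
    set v : ℝ := (p : ℂ).im with hv
    clear_value u v
    have hv0 : 0 < v := by rw [hv]; exact p.im_pos
    have hAu : 0 < A + 2 * c * u := by nlinarith [sq_nonneg (c + u), hp, hv0]
    have hkey : v * T ≤ r * (A + 2 * c * u) := by
      have hvT : (v * T) ^ 2 = (r ^ 2 - u ^ 2) * (A ^ 2 - 4 * c ^ 2 * r ^ 2) := by
        rw [mul_pow, hT2]; linear_combination (A ^ 2 - 4 * c ^ 2 * r ^ 2) * hp
      have hsq : (v * T) ^ 2 ≤ (r * (A + 2 * c * u)) ^ 2 := by
        nlinarith [sq_nonneg (u * A + 2 * c * r ^ 2), hvT]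
      nlinarith [hsq, mul_pos hr hAu, mul_nonneg hv0.le hT0.le]
    have h1 : Real.cosh (Real.arsinh q) ≤ Real.cosh (dist UpperHalfPlane.I p) := by
      rw [hcoshq, hcoshd p, ← hv, show (p : ℂ).re = u + c by rw [hu]; ring]
      have expand : 1 + ((u + c) ^ 2 + (1 - v) ^ 2) / (2 * v) = (A + 2 * c * u) / (2 * v) := by
        rw [show (u + c) ^ 2 + (1 - v) ^ 2 = A + 2 * c * u - 2 * v from by linear_combination hp - hA]
        field_simp
        ring
      rw [expand, div_le_div_iff₀ (by positivity) (by positivity)]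
      nlinarith [hkey]
    have h2 := Real.cosh_le_cosh.mp h1
    rwa [abs_of_nonneg (Real.arsinh_nonneg_iff.2 hq0), abs_of_nonneg dist_nonneg] at h2
  -- the minimizing point
  set u₀ : ℝ := -(2 * c * r ^ 2) / A with hu₀
  set v₀ : ℝ := r * T / A with hv₀
  have hv₀pos : 0 < v₀ := by rw [hv₀]; positivity
  have huv₀ : u₀ ^ 2 + v₀ ^ 2 = r ^ 2 := by
    rw [hu₀, hv₀, div_pow, div_pow, ← add_div, div_eq_iff (by positivity)]
    linear_combination r ^ 2 * hT2
  set p₀ : UpperHalfPlane := ⟨⟨c + u₀, v₀⟩, hv₀pos⟩ with hp₀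
  have hp₀re : (p₀ : ℂ).re = c + u₀ := rfl
  have hp₀im : (p₀ : ℂ).im = v₀ := rfl
  have hp₀mem : p₀ ∈ geodesicUHP x w := by
    rw [hmem, hp₀re, hp₀im]; linear_combination huv₀
  have hcosh₀ : Real.cosh (dist UpperHalfPlane.I p₀) = Real.cosh (Real.arsinh q) := by
    rw [hcoshd p₀, hcoshq, hp₀re, hp₀im]
    have hAu0 : A + 2 * c * u₀ = T ^ 2 / A := by
      rw [hu₀, hT2]; field_simp; ring
    have expand : 1 + ((c + u₀) ^ 2 + (1 - v₀) ^ 2) / (2 * v₀) = (A + 2 * c * u₀) / (2 * v₀) := by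
      rw [show (c + u₀) ^ 2 + (1 - v₀) ^ 2 = A + 2 * c * u₀ - 2 * v₀ from by linear_combination huv₀ - hA]
      field_simp
      ring
    rw [expand, hAu0, hv₀]
    field_simp
  have hd₀ : dist UpperHalfPlane.I p₀ = Real.arsinh q :=
    Real.cosh_strictMonoOn.injOn (Set.mem_Ici.2 dist_nonneg)
      (Set.mem_Ici.2 (Real.arsinh_nonneg_iff.2 hq0)) hcosh₀
  refine le_antisymm ?_ ?_
  · rw [← hd₀]; exact Metric.infDist_le_dist_of_mem hp₀mem
  · by_contra hcon
    push_neg at hcon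
    obtain ⟨y, hy, hdy⟩ := (Metric.infDist_lt_iff ⟨p₀, hp₀mem⟩).1 hcon
    exact absurd (hlow y hy) (not_le.2 hdy)


/-- For `ρ > 0` and `x < 0`, the point `w₀ = -W_ρ(-x)` lies in `(x, -1/x]`, and among
`w ∈ (x, -1/x]` the geodesic `γ(x,w)` is tangent to the closed hyperbolic ball of radius
`ρ` about `i` (i.e. `D x w = ρ`) iff `w = w₀`. -/
theorem tangent_point_neg (ρ x : ℝ) (hρ : 0 < ρ) (hx : x < 0) :
    -((-x * Real.sinh ρ - 1) / (-x + Real.sinh ρ)) ∈ Set.Ioc x (-1 / x) ∧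
      ∀ w ∈ Set.Ioc x (-1 / x),
        (D x w = ρ ↔ w = -((-x * Real.sinh ρ - 1) / (-x + Real.sinh ρ))) := by
  have hs : 0 < Real.sinh ρ := Real.sinh_pos_iff.2 hρ
  set s : ℝ := Real.sinh ρ with hsdef
  have hd : 0 < s - x := by linarith
  have hw₀ : -((-x * s - 1) / (-x + s)) = (x * s + 1) / (s - x) := by
    rw [show (-x + s) = s - x by ring, ← neg_div]
    congr 1
    ring
  have hmem₀ : (x * s + 1) / (s - x) ∈ Set.Ioc x (-1 / x) := by
    constructor
    · rw [lt_div_iff₀ hd]; nlinarith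
    · rw [show (-1 / x : ℝ) = 1 / (-x) by rw [neg_div, div_neg],
        div_le_div_iff₀ hd (by linarith : (0:ℝ) < -x)]
      nlinarith [mul_nonneg hs.le (sq_nonneg x)]
  rw [hw₀]
  refine ⟨hmem₀, fun w hw => ?_⟩
  obtain ⟨hw1, hw2⟩ := hw
  have hq : 0 ≤ x * w + 1 := by
    have h1 : x * (-1 / x) ≤ x * w := mul_le_mul_of_nonpos_left hw2 hx.le
    have h2 : x * (-1 / x) = -1 := by
      field_simp
      rw [div_self hx.ne]
    linarith [h2 ▸ h1]
  rw [D_eq_arsinh x w hw1 hq]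
  constructor
  · intro h
    have h2 : (x * w + 1) / (w - x) = s := by
      rw [← Real.sinh_arsinh ((x * w + 1) / (w - x)), h, hsdef]
    rw [div_eq_iff (by linarith : w - x ≠ 0)] at h2
    rw [eq_div_iff hd.ne']
    linear_combination -h2
  · intro h
    rw [h, show (x * ((x * s + 1) / (s - x)) + 1) / ((x * s + 1) / (s - x) - x) = s from by
      rw [div_eq_iff]
      · field_simp
        ring
      · rw [sub_ne_zero]
        intro hcon
        rw [div_eq_iff hd.ne'] at hcon
        nlinarith]
    exact Real.arsinh_sinh ρ
end

section
/- For every x > 0, every z ≥ 0, and every y ∈ [−1/x, x), one has D(x,y) ≤ z if and only if y ≤ W_z(x) = (x·sinh z − 1)/(x + sinh z); that is, among y ∈ [−1/x, x), the geodesics γ(x,y) whose hyperbolic distance from i is at most z are exactly those with y ∈ [−1/x, W_z(x)]. -/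
open Real MeasureTheory

set_option maxHeartbeats 1000000

/-- For `x > 0`, `z ≥ 0` and `y ∈ [-1/x, x)`, the geodesic `γ(x,y)` is within hyperbolic
distance `z` of `i` iff `y ≤ W_z(x) = (x sinh z - 1)/(x + sinh z)`. -/
theorem D_le_iff_le_W (x z : ℝ) (hx : 0 < x) (hz : 0 ≤ z) :
    ∀ y ∈ Set.Ico (-1 / x) x,
      (D x y ≤ z ↔ y ≤ (x * Real.sinh z - 1) / (x + Real.sinh z)) := by
  intro y hy
  obtain ⟨hy1, hy2⟩ := hy
  set s := Real.sinh z with hs_def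
  have hs : 0 ≤ s := Real.sinh_nonneg_iff.mpr hz
  have hxy : 0 < x - y := by linarith
  have h1 : 0 ≤ 1 + x * y := by
    have h := mul_le_mul_of_nonneg_left hy1 hx.le
    have h2 : x * (-1 / x) = -1 := by field_simp
    nlinarith [h, h2]
  have hA : (0:ℝ) < x^2 + y^2 + 2 := by positivity
  set S := Real.sqrt ((1 + x^2) * (1 + y^2)) with hS_def
  have hSsq : S^2 = (1 + x^2) * (1 + y^2) := Real.sq_sqrt (by positivity)
  have hSpos : 0 < S := Real.sqrt_pos.mpr (by positivity)
  set p0 : ℝ := (x + y) * (1 + x * y) / (x^2 + y^2 + 2) with hp0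
  set q0 : ℝ := (x - y) * S / (x^2 + y^2 + 2) with hq0
  have hq0pos : 0 < q0 := by positivity
  set w0 : UpperHalfPlane := ⟨⟨p0, q0⟩, hq0pos⟩ with hw0
  have hxyabs : |x - y| = x - y := abs_of_pos hxy
  have hmem : w0 ∈ geodesicUHP x y := by
    show ‖(w0 : ℂ) - (((x + y) / 2 : ℝ) : ℂ)‖ = |x - y| / 2
    rw [hxyabs, Complex.norm_def]
    have hre : ((w0 : ℂ) - (((x + y) / 2 : ℝ) : ℂ)).re = p0 - (x + y)/2 := by
      simp [hw0, UpperHalfPlane.coe]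
    have him : ((w0 : ℂ) - (((x + y) / 2 : ℝ) : ℂ)).im = q0 := by
      simp [hw0, UpperHalfPlane.coe]
    rw [Complex.normSq_apply, hre, him]
    have key : (p0 - (x + y)/2) * (p0 - (x + y)/2) + q0 * q0 = ((x-y)/2)^2 := by
      have e1 : p0 - (x+y)/2 = -((x+y)*(x-y)^2) / (2*(x^2+y^2+2)) := by
        rw [hp0]; field_simp; ring
      have e2 : q0 * q0 = (x-y)^2 * ((1+x^2)*(1+y^2)) / (x^2+y^2+2)^2 := by
        rw [hq0, ← hSsq]; field_simp
      rw [e1, e2]; field_simp; ring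
    rw [key]
    exact Real.sqrt_sq (by positivity)
  -- cosh of distances from I
  have hcosh : ∀ w : UpperHalfPlane, Real.cosh (dist UpperHalfPlane.I w)
      = 1 + ((w : ℂ).re^2 + (1 - (w : ℂ).im)^2) / (2 * (w : ℂ).im) := by
    intro w
    rw [UpperHalfPlane.cosh_dist, Complex.dist_eq, Complex.sq_norm, Complex.normSq_apply]
    have h1 : ((UpperHalfPlane.I : UpperHalfPlane) : ℂ) = Complex.I := rfl
    rw [h1]
    simp only [Complex.sub_re, Complex.sub_im, Complex.I_re, Complex.I_im]
    have h2 : (UpperHalfPlane.I : UpperHalfPlane).im = 1 := rfl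
    have h3 : UpperHalfPlane.im w = (w : ℂ).im := rfl
    rw [h2, h3]
    ring_nf
  -- cosh dist to w0 equals S/(x-y)
  have hkey : p0^2 + q0^2 + 1 = 2*S^2/(x^2+y^2+2) := by
    rw [hp0, hq0, div_pow, div_pow, mul_pow (x-y) S, hSsq]
    field_simp
    ring
  have hcoshw0 : Real.cosh (dist UpperHalfPlane.I w0) = S / (x - y) := by
    rw [hcosh w0]
    have hre0 : ((w0 : ℂ)).re = p0 := rfl
    have him0 : ((w0 : ℂ)).im = q0 := rfl
    rw [hre0, him0]
    have e : 1 + (p0^2 + (1 - q0)^2)/(2*q0) = (p0^2 + q0^2 + 1)/(2*q0) := by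
      field_simp; ring
    rw [e, hkey, hq0]
    field_simp
  constructor
  · -- forward
    intro hD
    set d0 := Real.arsinh ((1 + x*y)/(x-y)) with hd0_def
    have hu0 : 0 ≤ (1 + x*y)/(x-y) := by positivity
    have hd0nn : 0 ≤ d0 := Real.arsinh_nonneg_iff.mpr hu0
    have hcoshd0 : Real.cosh d0 = S / (x - y) := by
      rw [hd0_def, Real.cosh_arsinh,
        show 1 + ((1+x*y)/(x-y))^2 = ((1+x^2)*(1+y^2))/(x-y)^2 by field_simp; ring,
        Real.sqrt_div (by positivity), Real.sqrt_sq hxy.le]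
    have hpt : ∀ w ∈ geodesicUHP x y, d0 ≤ dist UpperHalfPlane.I w := by
      intro w hw
      obtain ⟨p, q, hpq⟩ : ∃ p q : ℝ, (w : ℂ) = ⟨p, q⟩ := ⟨(w:ℂ).re, (w:ℂ).im, rfl⟩
      have hq : 0 < q := by
        have h : 0 < (w : ℂ).im := w.2
        rw [hpq] at h
        exact h
      have hc : Complex.normSq ((w : ℂ) - (((x + y) / 2 : ℝ) : ℂ)) = ((x-y)/2)^2 := by
        rw [← Complex.sq_norm, hw, hxyabs]
      rw [hpq, Complex.normSq_apply] at hc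
      simp only [Complex.sub_re, Complex.sub_im, Complex.ofReal_re, Complex.ofReal_im] at hc
      have hq2 : q^2 = (x+y)*p - x*y - p^2 := by linear_combination hc
      have hcc : Real.cosh d0 ≤ Real.cosh (dist UpperHalfPlane.I w) := by
        rw [hcoshd0, hcosh w, hpq]
        show S / (x - y) ≤ 1 + (p^2 + (1 - q)^2)/(2*q)
        have hval : 1 + (p^2 + (1 - q)^2)/(2*q) = ((x+y)*p - x*y + 1)/(2*q) := by
          field_simp
          linear_combination hq2
        rw [hval]
        have hNpos : 0 < (x+y)*p - x*y + 1 := by nlinarith [hq2, sq_nonneg p, sq_nonneg q, hq]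
        rw [div_le_div_iff₀ hxy (by linarith)]
        have h4 : 4*((1+x^2)*(1+y^2))*q^2 = 4*((1+x^2)*(1+y^2))*((x+y)*p - x*y - p^2) := by
          linear_combination (4*((1+x^2)*(1+y^2))) * hq2
        have hP2 : ((1+x^2)*(1+y^2))*(2*q)^2 ≤ (((x+y)*p - x*y + 1)*(x-y))^2 := by
          nlinarith [sq_nonneg ((x^2+y^2+2)*p - (x+y)*(1+x*y)), h4]
        calc S * (2*q) = Real.sqrt (((1+x^2)*(1+y^2))*(2*q)^2) := by
              rw [Real.sqrt_mul (by positivity), Real.sqrt_sq (by positivity), hS_def]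
          _ ≤ Real.sqrt ((((x+y)*p - x*y + 1)*(x-y))^2) := Real.sqrt_le_sqrt hP2
          _ = ((x+y)*p - x*y + 1)*(x-y) := Real.sqrt_sq (by positivity)
      have := Real.cosh_le_cosh.mp hcc
      rwa [abs_of_nonneg hd0nn, abs_of_nonneg dist_nonneg] at this
    have hd0D : d0 ≤ D x y := by
      by_contra hcon
      push_neg at hcon
      obtain ⟨w, hw, hlt⟩ := (Metric.infDist_lt_iff ⟨w0, hmem⟩).mp hcon
      exact absurd hlt (not_lt.mpr (hpt w hw))
    have hd0z : d0 ≤ z := le_trans hd0D hD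
    have hsinh : (1 + x*y)/(x-y) ≤ s := by
      have := Real.sinh_le_sinh.mpr hd0z
      rwa [hd0_def, Real.sinh_arsinh] at this
    have h2 : 1 + x*y ≤ s*(x-y) := by
      rw [div_le_iff₀ hxy] at hsinh; linarith
    rw [le_div_iff₀ (by linarith : 0 < x + s)]
    nlinarith [h2]
  · -- backward
    intro hW
    have h2 : 1 + x*y ≤ (x-y)*s := by
      rw [le_div_iff₀ (by linarith : 0 < x + s)] at hW
      nlinarith [hW]
    have hSle : S ≤ (x - y) * Real.cosh z := by
      have hcz2 : Real.cosh z ^ 2 = 1 + s^2 := by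
        rw [Real.cosh_sq]; ring
      have hP : (1+x^2)*(1+y^2) ≤ ((x-y)*Real.cosh z)^2 := by
        rw [mul_pow, hcz2]; nlinarith [h2, h1, sq_nonneg (1+x*y)]
      calc S ≤ Real.sqrt (((x-y)*Real.cosh z)^2) := Real.sqrt_le_sqrt hP
        _ = (x-y)*Real.cosh z := Real.sqrt_sq (by positivity)
    have hcc : Real.cosh (dist UpperHalfPlane.I w0) ≤ Real.cosh z := by
      rw [hcoshw0, div_le_iff₀ hxy]
      linarith [hSle]
    have hle : dist UpperHalfPlane.I w0 ≤ z := by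
      have := Real.cosh_le_cosh.mp hcc
      rwa [abs_of_nonneg dist_nonneg, abs_of_nonneg hz] at this
    exact le_trans (Metric.infDist_le_dist_of_mem hmem) hle
end

section
/- Fix x > 0 and define h(y) = D(x,y) for y ∈ [−1/x, x). Then h(−1/x) = 0, h is strictly increasing on [−1/x, x), and h maps the interval [−1/x, x) onto [0, ∞) (in particular h(y) → ∞ as y → x from below). -/
open Real MeasureTheory

lemma cosh_dist_I (w : UpperHalfPlane) :
    Real.cosh (dist UpperHalfPlane.I w) = (w.re ^ 2 + 1 + w.im ^ 2) / (2 * w.im) := by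
  have := UpperHalfPlane.cosh_dist' UpperHalfPlane.I w
  rw [this]
  have h1 : (UpperHalfPlane.I).im = 1 := rfl
  have h2 : (UpperHalfPlane.I).re = 0 := by
    show (Complex.I).re = 0; simp
  rw [h1, h2]
  ring_nf

set_option maxHeartbeats 2000000 in
lemma D_eq (x y : ℝ) (hx : 0 < x) (hy1 : -1/x ≤ y) (hy2 : y < x) :
    D x y = arsinh ((1 + x*y) / (x - y)) := by
  have hxy : 0 < x - y := by linarith
  obtain ⟨c, hc⟩ : ∃ c : ℝ, c = (x + y) / 2 := ⟨_, rfl⟩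
  obtain ⟨r, hrdef⟩ : ∃ r : ℝ, r = (x - y) / 2 := ⟨_, rfl⟩
  have hr : 0 < r := by rw [hrdef]; positivity
  obtain ⟨A, hA⟩ : ∃ A : ℝ, A = 1 + c^2 + r^2 := ⟨_, rfl⟩
  have hApos : 0 < A := by rw [hA]; positivity
  obtain ⟨B, hB⟩ : ∃ B : ℝ, B = A^2 - 4*r^2*c^2 := ⟨_, rfl⟩
  have hBeq : B = (1 + x*y)^2 + (x - y)^2 := by
    rw [hB, hA, hc, hrdef]; ring
  have hBpos : 0 < B := by nlinarith [sq_nonneg (1 + x*y)]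
  obtain ⟨S, hS⟩ : ∃ S : ℝ, S = Real.sqrt B := ⟨_, rfl⟩
  have hS0 : 0 < S := by rw [hS]; exact Real.sqrt_pos.mpr hBpos
  have hSsq : S^2 = B := by rw [hS]; exact Real.sq_sqrt hBpos.le
  have hxy1 : 0 ≤ 1 + x*y := by
    have : -1 ≤ y * x := by
      rw [div_le_iff₀ hx] at hy1; linarith
    nlinarith
  have hS2r : x - y ≤ S := by
    rw [hS]
    exact (Real.le_sqrt' hxy).mpr (by nlinarith [sq_nonneg (1 + x*y)])
  -- the minimizing point
  obtain ⟨p₀, hp₀⟩ : ∃ p : ℝ, p = c - 2*r^2*c/A := ⟨_, rfl⟩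
  obtain ⟨q₀, hq₀⟩ : ∃ q : ℝ, q = r*S/A := ⟨_, rfl⟩
  have hq₀pos : 0 < q₀ := by rw [hq₀]; positivity
  set w₀ : UpperHalfPlane := ⟨⟨p₀, q₀⟩, hq₀pos⟩ with hw₀def
  have hw₀c : (w₀ : ℂ) = ⟨p₀, q₀⟩ := rfl
  have hA0 : A ≠ 0 := ne_of_gt hApos
  have hcirc₀ : (p₀ - c)^2 + q₀^2 = r^2 := by
    rw [hp₀, hq₀]
    field_simp
    nlinarith [hSsq, hB]
  have hmem : w₀ ∈ geodesicUHP x y := by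
    show ‖(w₀ : ℂ) - (((x + y) / 2 : ℝ) : ℂ)‖ = |x - y| / 2
    have habs : |x - y| = x - y := abs_of_pos hxy
    rw [habs]
    have heq : ((w₀ : ℂ) - (((x + y) / 2 : ℝ) : ℂ)) = ⟨p₀ - c, q₀⟩ := by
      rw [hw₀c]
      apply Complex.ext <;> simp [hc]
    rw [heq, Complex.norm_def, Complex.normSq_mk]
    have hval : (p₀ - c) * (p₀ - c) + q₀ * q₀ = ((x-y)/2)^2 := by
      rw [← hrdef]; nlinarith [hcirc₀]
    rw [hval, Real.sqrt_sq (by positivity)]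
  -- cosh of the target value
  have hcosh_target : Real.cosh (arsinh ((1 + x*y) / (x - y))) = S / (x - y) := by
    rw [Real.cosh_arsinh]
    rw [show (1 : ℝ) + ((1 + x*y)/(x-y))^2 = B / (x-y)^2 by
      rw [hBeq]; field_simp; ring]
    rw [Real.sqrt_div hBpos.le, Real.sqrt_sq hxy.le, hS]
  have htarget_nonneg : 0 ≤ arsinh ((1 + x*y) / (x - y)) :=
    Real.arsinh_nonneg_iff.mpr (by positivity)
  -- key lower bound: every point on the geodesic is at distance ≥ target
  have key : ∀ w : UpperHalfPlane, w ∈ geodesicUHP x y →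
      arsinh ((1 + x*y) / (x - y)) ≤ dist UpperHalfPlane.I w := by
    intro w hw
    obtain ⟨p, hp⟩ : ∃ p : ℝ, p = w.re := ⟨_, rfl⟩
    obtain ⟨q, hq⟩ : ∃ q : ℝ, q = w.im := ⟨_, rfl⟩
    have hqpos : 0 < q := by rw [hq]; exact w.im_pos
    have hcirc : (p - c)^2 + q^2 = r^2 := by
      have habs : |x - y| = x - y := abs_of_pos hxy
      have hmem2 := hw
      simp only [geodesicUHP, Set.mem_setOf_eq, habs] at hmem2
      have h2 : ‖(w : ℂ) - (((x + y) / 2 : ℝ) : ℂ)‖ ^ 2 = ((x-y)/2)^2 := by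
        rw [hmem2]
      rw [Complex.sq_norm, Complex.normSq_apply] at h2
      simp only [Complex.sub_re, Complex.sub_im, Complex.ofReal_re, Complex.ofReal_im] at h2
      have hre : (w : ℂ).re = p := hp.symm
      have him : (w : ℂ).im = q := hq.symm
      rw [hre, him] at h2
      rw [← hc, ← hrdef] at h2
      nlinarith [h2]
    have hF : 0 < r*A - 2*r*c*(p-c) + q*S := by
      nlinarith [sq_nonneg (c - (p - c)), mul_pos hqpos hS0, sq_nonneg (p - c), hA]
    have hGF : 0 ≤ (r*A - 2*r*c*(p-c) + q*S) * (r*A + 2*r*c*(p-c) - q*S) := by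
      nlinarith [sq_nonneg (S*(p-c) + 2*r*c*q), hSsq, hcirc, hB]
    have hG : 0 ≤ r*A + 2*r*c*(p-c) - q*S := nonneg_of_mul_nonneg_right hGF hF
    have hcoshw : Real.cosh (dist UpperHalfPlane.I w) = (p^2 + 1 + q^2) / (2*q) := by
      rw [cosh_dist_I w, hp, hq]
    have hle : S / (x - y) ≤ (p^2 + 1 + q^2) / (2*q) := by
      rw [div_le_div_iff₀ hxy (by positivity)]
      have hxy2r : x - y = 2 * r := by rw [hrdef]; ring
      rw [hxy2r]
      nlinarith [hG, hcirc, hA]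
    have hch : Real.cosh (arsinh ((1 + x*y) / (x - y))) ≤ Real.cosh (dist UpperHalfPlane.I w) := by
      rw [hcosh_target, hcoshw]; exact hle
    have habs2 := Real.cosh_le_cosh.mp hch
    rwa [abs_of_nonneg htarget_nonneg, abs_of_nonneg dist_nonneg] at habs2
  -- the distance to the minimizing point equals the target
  have hdist₀ : dist UpperHalfPlane.I w₀ = arsinh ((1 + x*y) / (x - y)) := by
    have hcoshw : Real.cosh (dist UpperHalfPlane.I w₀) = (p₀^2 + 1 + q₀^2) / (2*q₀) := by
      have h1 : w₀.re = p₀ := rfl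
      have h2 : w₀.im = q₀ := rfl
      rw [cosh_dist_I w₀, h1, h2]
    have e1 : p₀^2 + 1 + q₀^2 = B/A := by
      have e2 : A + 2*c*(p₀ - c) = B/A := by
        rw [hp₀, hB]; field_simp; ring
      nlinarith [hcirc₀, hA, e2]
    have hval : (p₀^2 + 1 + q₀^2) / (2*q₀) = S / (x - y) := by
      have hxy2r : x - y = 2 * r := by rw [hrdef]; ring
      rw [hxy2r, e1, hq₀, div_eq_div_iff (by positivity) (by positivity)]
      field_simp
      nlinarith [hSsq]
    have hch : Real.cosh (dist UpperHalfPlane.I w₀) = Real.cosh (arsinh ((1 + x*y) / (x - y))) := by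
      rw [hcoshw, hval, hcosh_target]
    have habs : |dist UpperHalfPlane.I w₀| = |arsinh ((1 + x*y) / (x - y))| :=
      le_antisymm (Real.cosh_le_cosh.mp hch.le) (Real.cosh_le_cosh.mp hch.ge)
    rwa [abs_of_nonneg dist_nonneg, abs_of_nonneg htarget_nonneg] at habs
  refine le_antisymm ?_ ?_
  · rw [← hdist₀]; exact Metric.infDist_le_dist_of_mem hmem
  · by_contra h
    rw [not_le] at h
    obtain ⟨w, hwmem, hlt⟩ := (Metric.infDist_lt_iff ⟨w₀, hmem⟩).mp h
    exact absurd hlt (not_lt.mpr (key w hwmem))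


/-- For fixed `x > 0`, the function `y ↦ D x y` vanishes at `y = -1/x`, is strictly
increasing on `[-1/x, x)`, and maps `[-1/x, x)` onto `[0, ∞)`. -/
theorem D_strictMonoOn_and_image (x : ℝ) (hx : 0 < x) :
    D x (-1 / x) = 0 ∧
      StrictMonoOn (fun y => D x y) (Set.Ico (-1 / x) x) ∧
      (fun y => D x y) '' Set.Ico (-1 / x) x = Set.Ici 0 := by
  have hinv : 0 < 1/x := by positivity
  have hxx : -1/x < x := by
    have : -1/x = -(1/x) := by ring
    rw [this]; linarith
  refine ⟨?_, ?_, ?_⟩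
  · rw [D_eq x (-1/x) hx le_rfl hxx]
    have h0 : 1 + x * (-1/x) = 0 := by field_simp; norm_num
    rw [h0, zero_div, Real.arsinh_zero]
  · intro a ha b hb hab
    simp only
    rw [D_eq x a hx ha.1 ha.2, D_eq x b hx hb.1 hb.2]
    rw [Real.arsinh_lt_arsinh]
    have ha2 : 0 < x - a := by linarith [ha.2]
    have hb2 : 0 < x - b := by linarith [hb.2]
    rw [div_lt_div_iff₀ ha2 hb2]
    nlinarith [mul_nonneg (sub_pos.mpr hab).le (sq_nonneg x), hab]
  · ext t
    simp only [Set.mem_image, Set.mem_Ici, Set.mem_Ico]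
    constructor
    · rintro ⟨y, ⟨hy1, hy2⟩, rfl⟩
      rw [D_eq x y hx hy1 hy2]
      have hxy : 0 < x - y := by linarith
      have hxy1 : 0 ≤ 1 + x*y := by
        have : -1 ≤ y * x := by rw [div_le_iff₀ hx] at hy1; linarith
        nlinarith
      exact Real.arsinh_nonneg_iff.mpr (by positivity)
    · intro ht
      obtain ⟨u, hu⟩ : ∃ u : ℝ, u = Real.sinh t := ⟨_, rfl⟩
      have hu0 : 0 ≤ u := by rw [hu]; exact Real.sinh_nonneg_iff.mpr ht
      have hux : 0 < u + x := by linarith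
      have hy1 : -1/x ≤ (u*x - 1)/(u + x) := by
        rw [div_le_div_iff₀ hx hux]
        nlinarith [mul_nonneg hu0 (sq_nonneg x)]
      have hy2 : (u*x - 1)/(u + x) < x := by
        rw [div_lt_iff₀ hux]
        nlinarith
      refine ⟨(u*x - 1)/(u + x), ⟨hy1, hy2⟩, ?_⟩
      rw [D_eq x _ hx hy1 hy2]
      have hval : (1 + x * ((u*x - 1)/(u + x))) / (x - (u*x - 1)/(u + x)) = u := by
        rw [div_eq_iff]
        · field_simp
          ring
        · have hd : x - (u*x - 1)/(u + x) = (x^2 + 1)/(u + x) := by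
            field_simp; ring
          rw [hd]
          positivity
      rw [hval, hu, Real.arsinh_sinh]
end

section
/- Let k ≥ 5 be an integer and let z satisfy 0 ≤ z ≤ δ_k = arsinh(cot(2π/k)). If x ∈ (0, a_k) where a_k = tan(π/k), and y ∈ [−1/x, x) satisfies D(x,y) ≤ z, then y < −a_k. (Geometrically: every z-excursion with z ≤ δ_k is an approximating excursion.) -/
open Real MeasureTheory

/-- Key algebraic inequality: a point `(u, v)` on the circle with center `(c, 0)` and radius
`r` satisfies `1 + ((1 + c² - r²)/(2r))² ≤ (1 + (u² + (v-1)²)/(2v))²`. -/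
lemma key_ineq (c r u v : ℝ) (hv : 0 < v) (hr : 0 < r)
    (hcirc : (u - c) ^ 2 + v ^ 2 = r ^ 2) :
    1 + ((1 + c ^ 2 - r ^ 2) / (2 * r)) ^ 2
      ≤ (1 + (u ^ 2 + (v - 1) ^ 2) / (2 * v)) ^ 2 := by
  have hδ : u ^ 2 + (v - 1) ^ 2 = (1 + c ^ 2 + r ^ 2) + 2 * c * (u - c) - 2 * v := by
    linear_combination hcirc
  have h2 : (4 * r ^ 2 + (1 + c ^ 2 - r ^ 2) ^ 2) * ((u - c) ^ 2 + v ^ 2)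
      = (4 * r ^ 2 + (1 + c ^ 2 - r ^ 2) ^ 2) * r ^ 2 := by rw [hcirc]
  have h3 : 4 * r ^ 2 * v ^ 2 + v ^ 2 * (1 + c ^ 2 - r ^ 2) ^ 2
      ≤ r ^ 2 * (2 * v + (u ^ 2 + (v - 1) ^ 2)) ^ 2 := by
    rw [hδ]
    nlinarith [sq_nonneg ((1 + c ^ 2 + r ^ 2) * (u - c) + 2 * r ^ 2 * c), h2]
  have e1 : 1 + ((1 + c ^ 2 - r ^ 2) / (2 * r)) ^ 2
      = (4 * r ^ 2 * v ^ 2 + v ^ 2 * (1 + c ^ 2 - r ^ 2) ^ 2) / (4 * r ^ 2 * v ^ 2) := by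
    field_simp; ring
  have e2 : (1 + (u ^ 2 + (v - 1) ^ 2) / (2 * v)) ^ 2
      = (r ^ 2 * (2 * v + (u ^ 2 + (v - 1) ^ 2)) ^ 2) / (4 * r ^ 2 * v ^ 2) := by
    field_simp; ring
  rw [e1, e2]
  gcongr

/-- Any point of the semicircle with real center `c` and radius `r` is at hyperbolic distance
at least `arsinh ((1 + c² - r²)/(2r))` from `i`. -/
lemma dist_I_lower (c r : ℝ) (hr : 0 < r) (w : UpperHalfPlane)
    (hw : ‖(w : ℂ) - (c : ℂ)‖ = r) (K : ℝ) (hK : 0 ≤ K)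
    (hKr : K = (1 + c ^ 2 - r ^ 2) / (2 * r)) :
    Real.arsinh K ≤ dist UpperHalfPlane.I w := by
  have hv : 0 < (w : ℂ).im := w.im_pos
  have hcirc : ((w : ℂ).re - c) ^ 2 + (w : ℂ).im ^ 2 = r ^ 2 := by
    have h : ‖(w : ℂ) - (c : ℂ)‖ ^ 2 = r ^ 2 := by rw [hw]
    rw [Complex.sq_norm, Complex.normSq_apply] at h
    simp only [Complex.sub_re, Complex.sub_im, Complex.ofReal_re, Complex.ofReal_im,
      sub_zero] at h
    linear_combination h
  have hcosh : Real.cosh (dist UpperHalfPlane.I w)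
      = 1 + ((w : ℂ).re ^ 2 + ((w : ℂ).im - 1) ^ 2) / (2 * (w : ℂ).im) := by
    rw [UpperHalfPlane.cosh_dist]
    have h1 : (UpperHalfPlane.I : ℂ) = Complex.I := rfl
    have h2 : UpperHalfPlane.I.im = 1 := rfl
    have h3 : w.im = (w : ℂ).im := rfl
    rw [h1, h2, Complex.dist_eq, Complex.sq_norm, Complex.normSq_apply, h3]
    simp only [Complex.sub_re, Complex.sub_im, Complex.I_re, Complex.I_im]
    have hvne : (w : ℂ).im ≠ 0 := hv.ne'
    field_simp
    ring
  have hkey : Real.cosh (Real.arsinh K) ≤ Real.cosh (dist UpperHalfPlane.I w) := by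
    rw [Real.cosh_arsinh, hcosh, hKr]
    have h3 := key_ineq c r (w : ℂ).re (w : ℂ).im hv hr hcirc
    have h4 : (0:ℝ) ≤ 1 + ((w : ℂ).re ^ 2 + ((w : ℂ).im - 1) ^ 2) / (2 * (w : ℂ).im) := by
      positivity
    calc √(1 + ((1 + c ^ 2 - r ^ 2) / (2 * r)) ^ 2)
        ≤ √((1 + ((w : ℂ).re ^ 2 + ((w : ℂ).im - 1) ^ 2) / (2 * (w : ℂ).im)) ^ 2) :=
          Real.sqrt_le_sqrt h3
      _ = _ := Real.sqrt_sq h4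
  have := Real.cosh_le_cosh.mp hkey
  rwa [abs_of_nonneg (Real.arsinh_nonneg_iff.mpr hK), abs_of_nonneg dist_nonneg] at this

/-- For `k ≥ 5` and `0 ≤ z ≤ δ_k = arsinh (cot (2π/k))`, every `z`-excursion is an
approximating excursion: if `x ∈ (0, tan (π/k))`, `y ∈ [-1/x, x)` and `D x y ≤ z`,
then `y < -tan (π/k)`. -/
theorem excursion_is_approximating (k : ℕ) (hk : 5 ≤ k) (z : ℝ) (hz0 : 0 ≤ z)
    (hz : z ≤ Real.arsinh (Real.cot (2 * π / k))) (x y : ℝ)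
    (hx : x ∈ Set.Ioo 0 (Real.tan (π / k))) (hy : y ∈ Set.Ico (-1 / x) x)
    (hD : D x y ≤ z) : y < -Real.tan (π / k) := by
  obtain ⟨hx0, hxa⟩ := hx
  obtain ⟨hy1, hyx⟩ := hy
  by_contra hcon
  push_neg at hcon
  set a := Real.tan (π / k) with ha
  have hk5 : (5:ℝ) ≤ (k:ℝ) := by exact_mod_cast hk
  have hπ := Real.pi_pos
  have hπk0 : 0 < π / (k:ℝ) := by positivity
  have hπk4 : π / (k:ℝ) < π / 4 :=
    div_lt_div_of_pos_left hπ (by norm_num) (by linarith)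
  have hπk2 : π / (k:ℝ) < π / 2 := by linarith
  have ha0 : 0 < a := Real.tan_pos_of_pos_of_lt_pi_div_two hπk0 hπk2
  have ha1 : a < 1 := by
    rw [ha, ← Real.tan_pi_div_four]
    exact Real.tan_lt_tan_of_nonneg_of_lt_pi_div_two hπk0.le (by linarith) hπk4
  have hay : -a ≤ y := hcon
  have hxy : 0 < x - y := by linarith
  have hcos : 0 < Real.cos (π / k) := Real.cos_pos_of_mem_Ioo ⟨by linarith, hπk2⟩
  have hsin : 0 < Real.sin (π / k) := Real.sin_pos_of_pos_of_lt_pi hπk0 (by linarith)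
  have hcot : Real.cot (2 * π / k) = (1 - a ^ 2) / (2 * a) := by
    have h2 : 2 * π / (k:ℝ) = 2 * (π / k) := by ring
    rw [h2, Real.cot_eq_cos_div_sin, Real.sin_two_mul, Real.cos_two_mul', ha,
      Real.tan_eq_sin_div_cos]
    field_simp
  have hC0 : 0 < (1 - a ^ 2) / (2 * a) := div_pos (by nlinarith) (by linarith)
  have hK0 : 0 < 1 + x * y := by nlinarith
  set K := (1 + x * y) / (x - y) with hKdef
  have hCK : (1 - a ^ 2) / (2 * a) < K := by
    rw [hKdef, div_lt_div_iff₀ (by linarith) hxy]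
    nlinarith [mul_nonneg (by linarith : (0:ℝ) ≤ y + a)
      (by nlinarith : (0:ℝ) ≤ 2 * a * x + 1 - a ^ 2)]
  set c := (x + y) / 2 with hcdef
  set r := (x - y) / 2 with hrdef
  have hr : 0 < r := by rw [hrdef]; linarith
  have hKr : K = (1 + c ^ 2 - r ^ 2) / (2 * r) := by
    rw [hKdef, hcdef, hrdef]
    rw [div_eq_div_iff hxy.ne' (by positivity : (2 : ℝ) * ((x - y) / 2) ≠ 0)]
    ring
  have habs : |x - y| = x - y := abs_of_pos hxy
  have hlow : ∀ w ∈ geodesicUHP x y, Real.arsinh K ≤ dist UpperHalfPlane.I w := by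
    intro w hw
    apply dist_I_lower c r hr w _ K (le_of_lt (lt_trans hC0 hCK)) hKr
    have hw' : ‖(w : ℂ) - (((x + y) / 2 : ℝ) : ℂ)‖ = |x - y| / 2 := hw
    rw [habs] at hw'
    rw [hcdef, hrdef]
    exact hw'
  have hne : (geodesicUHP x y).Nonempty := by
    refine ⟨UpperHalfPlane.mk ((c : ℂ) + (r : ℝ) * Complex.I) (by simp [hr]), ?_⟩
    show ‖(UpperHalfPlane.mk ((c : ℂ) + (r : ℝ) * Complex.I) (by simp [hr]) : ℂ)
      - (((x + y) / 2 : ℝ) : ℂ)‖ = |x - y| / 2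
    rw [UpperHalfPlane.coe_mk]
    have : ((c : ℂ) + (r : ℝ) * Complex.I - (((x + y) / 2 : ℝ) : ℂ)) = (r : ℝ) * Complex.I := by
      rw [hcdef]; push_cast; ring
    rw [this, norm_mul, Complex.norm_real, Real.norm_eq_abs, Complex.norm_I, habs, abs_of_pos hr, hrdef]
    ring
  have hlt : D x y < Real.arsinh K :=
    lt_of_le_of_lt (hD.trans (hz.trans_eq (by rw [hcot])))
      (Real.arsinh_lt_arsinh.mpr hCK)
  unfold D at hlt
  obtain ⟨w, hwmem, hwlt⟩ := (Metric.infDist_lt_iff hne).mp hlt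
  exact absurd hwlt (not_lt.mpr (hlow w hwmem))
end

section
/- Let k ≥ 3 be an integer, a_k = tan(π/k), and r_k = arsinh(cot(π/k)). If x ∈ (0, a_k) and y ∈ [−1/x, −a_k), then D(x,y) < r_k; that is, every geodesic γ(x,y) with x ∈ (0, a_k) and y ∈ [−1/x, −a_k) meets the open hyperbolic ball of radius r_k about i. (Geometrically: every approximating excursion is a z-excursion for some z < r_k.) -/
open Real MeasureTheory

set_option maxHeartbeats 1000000 in
/-- For `k ≥ 3`, every approximating excursion is a `z`-excursion for some `z < r_k`:
if `x ∈ (0, tan (π/k))` and `y ∈ [-1/x, -tan (π/k))`, then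
`D x y < r_k = arsinh (cot (π/k))`. -/
theorem approximating_excursion_depth_lt (k : ℕ) (hk : 3 ≤ k) (x y : ℝ)
    (hx : x ∈ Set.Ioo 0 (Real.tan (π / k)))
    (hy : y ∈ Set.Ico (-1 / x) (-Real.tan (π / k))) :
    D x y < Real.arsinh (Real.cot (π / k)) := by
  obtain ⟨hx0, hxa⟩ := hx
  obtain ⟨hy1, hya⟩ := hy
  set θ : ℝ := π / k with hθ
  have hk0 : (0 : ℝ) < k := by positivity
  have hθ0 : 0 < θ := by positivity
  have hθlt : θ < π / 2 := by
    have h1 : θ ≤ π / 3 := by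
      rw [hθ]
      apply div_le_div_of_nonneg_left pi_pos.le (by norm_num)
      exact_mod_cast hk
    have h2 : π / 3 < π / 2 := by
      have := pi_pos
      linarith
    linarith
  have hsin : 0 < Real.sin θ := Real.sin_pos_of_pos_of_lt_pi hθ0 (by linarith [pi_pos])
  have hcos : 0 < Real.cos θ := Real.cos_pos_of_mem_Ioo ⟨by linarith, hθlt⟩
  have ha : 0 < Real.tan θ := Real.tan_pos_of_pos_of_lt_pi_div_two hθ0 hθlt
  set a : ℝ := Real.tan θ with haa
  have hcot : Real.cot θ = 1 / a := by
    rw [Real.cot_eq_cos_div_sin, haa, Real.tan_eq_sin_div_cos]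
    field_simp
  have hcotpos : 0 < Real.cot θ := by rw [hcot]; positivity
  -- basic inequalities
  have hyneg : y < 0 := lt_trans hya (by linarith)
  have hxylt : 0 < x - y := by linarith
  have hq0 : 0 ≤ 1 + x * y := by
    have h : x * (-1 / x) ≤ x * y := mul_le_mul_of_nonneg_left hy1 hx0.le
    have hx' : x * (-1 / x) = -1 := by field_simp
    rw [hx'] at h
    linarith
  -- key inequality : a * (1 + x*y) < x - y
  have hkey : a * (1 + x * y) < x - y := by
    have h1 : 0 < 1 + a * x := by positivity
    have h2 : y * (1 + a * x) < (-a) * (1 + a * x) :=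
      mul_lt_mul_of_pos_right hya h1
    nlinarith [mul_pos hx0 (mul_pos ha ha)]
  have hq2R : 1 + x * y < (x - y) * Real.cot θ := by
    rw [hcot, mul_one_div, lt_div_iff₀ ha]
    nlinarith [hkey]
  -- set up the witness point
  set q : ℝ := 1 + x * y with hqdef
  set c : ℝ := (x + y) / 2 with hcdef
  set R : ℝ := (x - y) / 2 with hRdef
  have hR : 0 < R := by rw [hRdef]; linarith
  set A : ℝ := c ^ 2 + R ^ 2 + 1 with hAdef
  have hA : 0 < A := by positivity
  set S : ℝ := Real.sqrt (4 * R ^ 2 + q ^ 2) with hSdef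
  have hS2 : S ^ 2 = 4 * R ^ 2 + q ^ 2 := Real.sq_sqrt (by positivity)
  have hS : 0 < S := by
    rw [hSdef]
    exact Real.sqrt_pos.mpr (by positivity)
  have hqc : q = 1 + c ^ 2 - R ^ 2 := by
    rw [hqdef, hcdef, hRdef]; ring
  have him : (0 : ℝ) < R * S / A := by positivity
  set w₀ : UpperHalfPlane := ⟨⟨c * q / A, R * S / A⟩, him⟩ with hw₀
  have hAne : A ≠ 0 := ne_of_gt hA
  -- membership in the geodesic
  have hmem : w₀ ∈ geodesicUHP x y := by
    show ‖(w₀ : ℂ) - (((x + y) / 2 : ℝ) : ℂ)‖ = |x - y| / 2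
    have habs : |x - y| = x - y := abs_of_pos (by linarith)
    rw [Complex.norm_def, Complex.normSq_apply]
    have hre : ((w₀ : ℂ) - (((x + y) / 2 : ℝ) : ℂ)).re = c * q / A - c := by
      simp [hw₀, ← hcdef]
    have him' : ((w₀ : ℂ) - (((x + y) / 2 : ℝ) : ℂ)).im = R * S / A := by
      simp [hw₀]
    rw [hre, him']
    have hS2' : S ^ 2 = 4 * R ^ 2 + (1 + c ^ 2 - R ^ 2) ^ 2 := by rw [hS2, hqc]
    have hval : (c * q / A - c) * (c * q / A - c) + R * S / A * (R * S / A) = R ^ 2 := by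
      field_simp
      rw [hqc, hAdef]
      linear_combination (R ^ 2) * hS2'
    rw [hval, habs, hRdef]
    rw [show ((x - y) / 2) ^ 2 = ((x - y) / 2) * ((x - y) / 2) by ring]
    exact Real.sqrt_mul_self (by linarith)
  -- the hyperbolic distance from I to the witness point
  have hdist : Real.cosh (dist UpperHalfPlane.I w₀) = S / (2 * R) := by
    rw [UpperHalfPlane.cosh_dist']
    have h1 : UpperHalfPlane.I.re = 0 := rfl
    have h2 : UpperHalfPlane.I.im = 1 := rfl
    have h3 : w₀.re = c * q / A := rfl
    have h4 : w₀.im = R * S / A := rfl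
    rw [h1, h2, h3, h4]
    have hS2' : S ^ 2 = 4 * R ^ 2 + (1 + c ^ 2 - R ^ 2) ^ 2 := by rw [hS2, hqc]
    have hiden : c ^ 2 * q ^ 2 + A ^ 2 + R ^ 2 * S ^ 2 = S ^ 2 * A := by
      rw [hS2, hqc, hAdef]; ring
    have hnum : (0 - c * q / A) ^ 2 + 1 ^ 2 + (R * S / A) ^ 2 = S ^ 2 / A := by
      have h5 : (0 - c * q / A) ^ 2 + 1 ^ 2 + (R * S / A) ^ 2
          = (c ^ 2 * q ^ 2 + A ^ 2 + R ^ 2 * S ^ 2) / A ^ 2 := by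
        field_simp
        ring
      rw [h5, hiden, pow_two A, mul_div_mul_right _ _ hAne]
    rw [hnum]
    rw [div_eq_div_iff (by positivity) (by positivity)]
    field_simp [hAne]
  -- conclude
  have hfinal : S / (2 * R) < Real.sqrt (1 + Real.cot θ ^ 2) := by
    rw [div_lt_iff₀ (by positivity)]
    have hq2R' : q < Real.cot θ * (2 * R) := by
      rw [hRdef]; nlinarith [hq2R]
    have hlt : 4 * R ^ 2 + q ^ 2 < (1 + Real.cot θ ^ 2) * (2 * R) ^ 2 := by
      nlinarith [mul_self_lt_mul_self hq0 hq2R']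
    calc S < Real.sqrt ((1 + Real.cot θ ^ 2) * (2 * R) ^ 2) := by
            rw [hSdef]; exact Real.sqrt_lt_sqrt (by positivity) hlt
      _ = Real.sqrt (1 + Real.cot θ ^ 2) * (2 * R) := by
            rw [Real.sqrt_mul (by positivity), Real.sqrt_sq (by positivity)]
  have hcoshlt : Real.cosh (dist UpperHalfPlane.I w₀) <
      Real.cosh (Real.arsinh (Real.cot θ)) := by
    rw [hdist, Real.cosh_arsinh]
    exact hfinal
  have hdlt : dist UpperHalfPlane.I w₀ < Real.arsinh (Real.cot θ) := by
    have h := Real.cosh_lt_cosh.mp hcoshlt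
    rwa [abs_of_nonneg dist_nonneg,
      abs_of_nonneg (Real.arsinh_nonneg_iff.mpr hcotpos.le)] at h
  exact lt_of_le_of_lt (Metric.infDist_le_dist_of_mem hmem) hdlt
end

section
/- Let k ≥ 3 be an integer, a_k = tan(π/k), and r_k = arsinh(cot(π/k)). If 0 ≤ y < x ≤ a_k, then D(x,y) ≥ r_k; that is, every geodesic γ(x,y) with both endpoints in [0, a_k] is disjoint from the open hyperbolic ball of radius r_k about i. -/
open Real MeasureTheory

set_option maxHeartbeats 2000000 in
/-- For `k ≥ 3`, every geodesic `γ(x,y)` with both endpoints in `[0, tan (π/k)]` is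
disjoint from the open hyperbolic ball of radius `r_k = arsinh (cot (π/k))` about `i`:
if `0 ≤ y < x ≤ tan (π/k)` then `D x y ≥ r_k`. -/
theorem geodesic_same_side_avoids_ball (k : ℕ) (hk : 3 ≤ k) (x y : ℝ)
    (hy0 : 0 ≤ y) (hyx : y < x) (hx : x ≤ Real.tan (π / k)) :
    Real.arsinh (Real.cot (π / k)) ≤ D x y := by
  obtain ⟨θ, hθdef⟩ : ∃ θ : ℝ, θ = π / k := ⟨_, rfl⟩
  rw [← hθdef] at hx ⊢
  have hkpos : (0:ℝ) < k := by positivity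
  have hθ0 : 0 < θ := hθdef ▸ div_pos Real.pi_pos hkpos
  have hθlt : θ < π / 2 := by
    rw [hθdef, div_lt_div_iff₀ hkpos two_pos]
    have : (3:ℝ) ≤ k := by exact_mod_cast hk
    nlinarith [Real.pi_pos]
  have hcos : 0 < Real.cos θ := Real.cos_pos_of_mem_Ioo ⟨by linarith, hθlt⟩
  have hsin : 0 < Real.sin θ := Real.sin_pos_of_pos_of_lt_pi hθ0 (by linarith [Real.pi_pos])
  have htan : 0 < Real.tan θ := Real.tan_pos_of_pos_of_lt_pi_div_two hθ0 hθlt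
  have hx0 : 0 < x := lt_of_le_of_lt hy0 hyx
  -- nonempty geodesic
  have hr : 0 < (x - y) / 2 := by linarith
  have hne : (geodesicUHP x y).Nonempty := by
    refine ⟨⟨(((x + y) / 2 : ℝ) : ℂ) + (((x - y) / 2 : ℝ) : ℂ) * Complex.I, by
      simp [Complex.add_im, Complex.mul_im]; linarith⟩, ?_⟩
    show ‖(((x + y) / 2 : ℝ) : ℂ) + (((x - y) / 2 : ℝ) : ℂ) * Complex.I
        - (((x + y) / 2 : ℝ) : ℂ)‖ = |x - y| / 2
    have h0 : ((((x + y) / 2 : ℝ) : ℂ) + (((x - y) / 2 : ℝ) : ℂ) * Complex.I)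
        - (((x + y) / 2 : ℝ) : ℂ) = (((x - y) / 2 : ℝ) : ℂ) * Complex.I := by ring
    rw [h0, norm_mul, Complex.norm_I, Complex.norm_real, Real.norm_eq_abs,
      abs_of_pos hr, mul_one, abs_of_pos (by linarith : (0:ℝ) < x - y)]
  -- pointwise bound
  by_contra hcon
  push_neg at hcon
  rw [D, Metric.infDist_lt_iff hne] at hcon
  obtain ⟨w, hw, hlt⟩ := hcon
  refine absurd hlt (not_lt.mpr ?_)
  -- notation
  obtain ⟨u, hu⟩ : ∃ u : ℝ, w.re = u := ⟨_, rfl⟩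
  obtain ⟨v, hvdef⟩ : ∃ v : ℝ, w.im = v := ⟨_, rfl⟩
  have hv : 0 < v := hvdef ▸ w.im_pos
  -- circle equation
  have hcirc : (u - (x + y) / 2) ^ 2 + v ^ 2 = ((x - y) / 2) ^ 2 := by
    have h1 : ‖(w : ℂ) - (((x + y) / 2 : ℝ) : ℂ)‖ = |x - y| / 2 := hw
    have h2 := congrArg (· ^ 2) h1
    simp only [Complex.sq_norm, Complex.normSq_apply, Complex.sub_re, Complex.sub_im,
      Complex.ofReal_re, Complex.ofReal_im, UpperHalfPlane.coe_re, UpperHalfPlane.coe_im] at h2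
    rw [abs_of_pos (by linarith : (0:ℝ) < x - y)] at h2
    rw [← hu, ← hvdef]
    linear_combination h2
  have hprod : (x - u) * (u - y) = v ^ 2 := by linear_combination -hcirc
  have hv2 : 0 < v ^ 2 := pow_pos hv 2
  have huy : y < u := by nlinarith
  have hux : u < x := by nlinarith
  -- key inequality : (x-y)^2 ≤ sin θ ^2 (1+x^2)(1+y^2)
  have hsa : Real.sin θ ^ 2 * (1 + Real.tan θ ^ 2) = Real.tan θ ^ 2 := by
    rw [Real.tan_eq_sin_div_cos]
    field_simp
    exact Real.cos_sq_add_sin_sq θ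
  have key1 : x - y ≤ Real.tan θ * (1 + x * y) := by
    nlinarith [mul_nonneg hy0 (mul_pos htan hx0).le]
  have key1sq : (x - y) ^ 2 ≤ Real.tan θ ^ 2 * (1 + x * y) ^ 2 := by
    nlinarith [mul_nonneg hy0 hx0.le]
  have hkey' : (x - y) ^ 2 * (1 + Real.tan θ ^ 2)
      ≤ Real.tan θ ^ 2 * ((1 + x ^ 2) * (1 + y ^ 2)) := by
    have e : Real.tan θ ^ 2 * ((1 + x ^ 2) * (1 + y ^ 2))
        - (x - y) ^ 2 * (1 + Real.tan θ ^ 2)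
        = Real.tan θ ^ 2 * (1 + x * y) ^ 2 - (x - y) ^ 2 := by ring
    linarith [key1sq, e]
  have hkey : (x - y) ^ 2 ≤ Real.sin θ ^ 2 * ((1 + x ^ 2) * (1 + y ^ 2)) := by
    have h2 : Real.sin θ ^ 2 * ((1 + x ^ 2) * (1 + y ^ 2)) * (1 + Real.tan θ ^ 2)
        = Real.tan θ ^ 2 * ((1 + x ^ 2) * (1 + y ^ 2)) := by
      linear_combination (1 + x ^ 2) * (1 + y ^ 2) * hsa
    have hpos : 0 < 1 + Real.tan θ ^ 2 := by positivity
    have := hkey'.trans_eq h2.symm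
    exact le_of_mul_le_mul_right this hpos
  -- main polynomial inequality
  obtain ⟨M, hMdef⟩ : ∃ M : ℝ, M = (x + y) * u + 1 - x * y := ⟨_, rfl⟩
  have hM : 0 < M := by
    have hp : 0 < (x + y) * (u - y) :=
      mul_pos (by linarith : (0:ℝ) < x + y) (by linarith : 0 < u - y)
    have e : M = (x + y) * (u - y) + y ^ 2 + 1 := by rw [hMdef]; ring
    have hy2 : 0 ≤ y ^ 2 := sq_nonneg y
    linarith
  have hmain : 4 * ((x - u) * (u - y)) ≤ Real.sin θ ^ 2 * M ^ 2 := by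
    obtain ⟨A, hA⟩ : ∃ A : ℝ, A = Real.sin θ ^ 2 * (x + y) ^ 2 + 4 := ⟨_, rfl⟩
    have hApos : 0 < A := by rw [hA]; positivity
    have hid : A * (Real.sin θ ^ 2 * M ^ 2 - 4 * ((x - u) * (u - y)))
        = (A * u + (Real.sin θ ^ 2 * (x + y) * (1 - x * y) - 2 * (x + y))) ^ 2
          + 4 * (Real.sin θ ^ 2 * ((1 + x ^ 2) * (1 + y ^ 2)) - (x - y) ^ 2) := by
      rw [hMdef, hA]; ring
    have h3 : 0 ≤ A * (Real.sin θ ^ 2 * M ^ 2 - 4 * ((x - u) * (u - y))) := by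
      rw [hid]
      have := sq_nonneg (A * u + (Real.sin θ ^ 2 * (x + y) * (1 - x * y) - 2 * (x + y)))
      linarith [hkey]
    have h4 := (mul_nonneg_iff_of_pos_left hApos).mp h3
    linarith
  have h2v : 2 * v ≤ Real.sin θ * M := by
    have hsM : 0 < Real.sin θ * M := mul_pos hsin hM
    nlinarith [hmain, hprod, hv]
  -- conclude via cosh
  have hMeq : u ^ 2 + v ^ 2 + 1 = M := by rw [hMdef]; linear_combination hcirc
  have hdist2 : dist (UpperHalfPlane.I : ℂ) (w : ℂ) ^ 2 = u ^ 2 + (1 - v) ^ 2 := by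
    rw [Complex.dist_eq, Complex.sq_norm, Complex.normSq_apply]
    simp only [Complex.sub_re, Complex.sub_im, UpperHalfPlane.coe_I, Complex.I_re, Complex.I_im,
      UpperHalfPlane.coe_re, UpperHalfPlane.coe_im]
    rw [hu, hvdef]; ring
  have hcoshle : Real.cosh (Real.arsinh (Real.cot θ)) ≤ Real.cosh (dist UpperHalfPlane.I w) := by
    rw [Real.cosh_arsinh, UpperHalfPlane.cosh_dist, hdist2, UpperHalfPlane.I_im]
    have hcot : Real.cot θ = Real.cos θ / Real.sin θ := Real.cot_eq_cos_div_sin θ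
    have hsq : 1 + Real.cot θ ^ 2 = (1 / Real.sin θ) ^ 2 := by
      rw [hcot]; field_simp
      exact Real.sin_sq_add_cos_sq θ
    rw [hsq, Real.sqrt_sq (by positivity), hvdef]
    have hv' : (0:ℝ) < 2 * 1 * v := by linarith
    rw [add_div' _ _ _ hv'.ne', div_le_div_iff₀ hsin hv']
    have : 1 * (2 * 1 * v) + (u ^ 2 + (1 - v) ^ 2) = u ^ 2 + v ^ 2 + 1 := by ring
    rw [this, hMeq]
    have e2 : M * Real.sin θ = Real.sin θ * M := mul_comm _ _
    rw [e2]
    linarith [h2v]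
  have habs := Real.cosh_le_cosh.mp hcoshle
  have hnn : 0 ≤ Real.arsinh (Real.cot θ) := by
    rw [Real.arsinh_nonneg_iff, Real.cot_eq_cos_div_sin]
    positivity
  rwa [abs_of_nonneg hnn, abs_of_nonneg dist_nonneg] at habs
end

section
/- Let k ≥ 3 be an integer. The geodesic of ℍ with endpoints tan(π/k) and 0 at infinity is tangent to the hyperbolic circle of radius r_k = arsinh(cot(π/k)) about i; that is, D(tan(π/k), 0) = arsinh(cot(π/k)). -/
open Real MeasureTheory

lemma circle_coords {t : ℝ} (ht : 0 < t) {w : UpperHalfPlane}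
    (hw : w ∈ geodesicUHP t 0) : w.re ^ 2 + w.im ^ 2 = t * w.re := by
  have h : ‖(w : ℂ) - (((t + 0) / 2 : ℝ) : ℂ)‖ = |t - 0| / 2 := hw
  have h2 : ‖(w : ℂ) - (((t + 0) / 2 : ℝ) : ℂ)‖ ^ 2 = (|t - 0| / 2) ^ 2 := by
    rw [h]
  rw [Complex.sq_norm, Complex.normSq_apply] at h2
  simp only [Complex.sub_re, Complex.sub_im, Complex.ofReal_re, Complex.ofReal_im,
    UpperHalfPlane.coe_re, UpperHalfPlane.coe_im, sub_zero, abs_of_pos ht] at h2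
  nlinarith [h2]

lemma cosh_dist_mem {t : ℝ} (ht : 0 < t) {w : UpperHalfPlane}
    (hw : w ∈ geodesicUHP t 0) :
    Real.cosh (dist UpperHalfPlane.I w) = (t * w.re + 1) / (2 * w.im) := by
  have hc := circle_coords ht hw
  have hy : 0 < w.im := w.im_pos
  rw [UpperHalfPlane.cosh_dist]
  have hd : dist (UpperHalfPlane.I : ℂ) (w : ℂ) ^ 2 = w.re ^ 2 + (1 - w.im) ^ 2 := by
    rw [Complex.dist_eq, Complex.sq_norm, Complex.normSq_apply]
    simp only [Complex.sub_re, Complex.sub_im, UpperHalfPlane.coe_re, UpperHalfPlane.coe_im]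
    rw [UpperHalfPlane.I_re, UpperHalfPlane.I_im]
    ring
  rw [hd]
  have hIim : (UpperHalfPlane.I).im = 1 := rfl
  rw [hIim]
  field_simp
  nlinarith [hc]

set_option maxHeartbeats 1000000 in
/-- For `k ≥ 3`, the geodesic with endpoints `tan (π/k)` and `0` at infinity is tangent
to the hyperbolic circle of radius `r_k = arsinh (cot (π/k))` about `i`. -/
theorem D_tan_zero (k : ℕ) (hk : 3 ≤ k) :
    D (Real.tan (π / k)) 0 = Real.arsinh (Real.cot (π / k)) := by
  set θ := π / k with hθdef
  have hk0 : (0 : ℝ) < k := by positivity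
  have hθ0 : 0 < θ := by positivity
  have hθlt : θ < π / 2 := by
    have : θ ≤ π / 3 := by
      rw [hθdef]
      apply div_le_div_of_nonneg_left pi_pos.le (by norm_num)
      exact_mod_cast hk
    linarith [pi_pos]
  set s := Real.sin θ with hsdef
  set c := Real.cos θ with hcdef
  have hs : 0 < s := Real.sin_pos_of_pos_of_lt_pi hθ0 (by linarith [pi_pos])
  have hc : 0 < c := Real.cos_pos_of_mem_Ioo ⟨by linarith, hθlt⟩
  have hsc : s ^ 2 + c ^ 2 = 1 := Real.sin_sq_add_cos_sq θ
  have htan : Real.tan θ = s / c := Real.tan_eq_sin_div_cos θ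
  have hcot : Real.cot θ = c / s := Real.cot_eq_cos_div_sin θ
  set t := Real.tan θ with htdef
  have ht : 0 < t := by rw [htan]; positivity
  -- cosh of target radius
  have hcosh_r : Real.cosh (Real.arsinh (Real.cot θ)) = 1 / s := by
    rw [Real.cosh_arsinh, hcot]
    rw [show 1 + (c / s) ^ 2 = (1 / s) ^ 2 by field_simp; nlinarith]
    exact Real.sqrt_sq (by positivity)
  -- the tangency point
  have him : 0 < s / (1 + c ^ 2) := by positivity
  set w₀ : UpperHalfPlane := ⟨⟨s * c / (1 + c ^ 2), s / (1 + c ^ 2)⟩, him⟩ with hw₀def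
  have hw₀re : w₀.re = s * c / (1 + c ^ 2) := rfl
  have hw₀im : w₀.im = s / (1 + c ^ 2) := rfl
  have hw₀mem : w₀ ∈ geodesicUHP t 0 := by
    show ‖((w₀ : ℂ)) - (((t + 0) / 2 : ℝ) : ℂ)‖ = |t - 0| / 2
    have habs : ‖(w₀ : ℂ) - (((t + 0) / 2 : ℝ) : ℂ)‖ ^ 2 = (|t - 0| / 2) ^ 2 := by
      rw [Complex.sq_norm, Complex.normSq_apply]
      simp only [Complex.sub_re, Complex.sub_im, Complex.ofReal_re, Complex.ofReal_im,
        sub_zero, abs_of_pos ht]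
      have h1 : ((w₀ : ℂ)).re = s * c / (1 + c ^ 2) := rfl
      have h2 : ((w₀ : ℂ)).im = s / (1 + c ^ 2) := rfl
      rw [h1, h2, htan]
      have h1c : (1 + c ^ 2) ≠ 0 := by positivity
      field_simp
      ring
    have h1 : 0 ≤ ‖(w₀ : ℂ) - (((t + 0) / 2 : ℝ) : ℂ)‖ := norm_nonneg _
    have h2 : (0 : ℝ) ≤ |t - 0| / 2 := by positivity
    rw [← Real.sqrt_sq h1, habs, Real.sqrt_sq h2]
  -- distance to the tangency point equals the radius
  have hdist_w₀ : dist UpperHalfPlane.I w₀ = Real.arsinh (Real.cot θ) := by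
    have hcosheq : Real.cosh (dist UpperHalfPlane.I w₀) =
        Real.cosh (Real.arsinh (Real.cot θ)) := by
      rw [cosh_dist_mem ht hw₀mem, hcosh_r, hw₀re, hw₀im, htan]
      field_simp
      linear_combination hsc
    have h1 : |dist UpperHalfPlane.I w₀| ≤ |Real.arsinh (Real.cot θ)| :=
      Real.cosh_le_cosh.mp hcosheq.le
    have h2 : |Real.arsinh (Real.cot θ)| ≤ |dist UpperHalfPlane.I w₀| :=
      Real.cosh_le_cosh.mp hcosheq.ge
    have h3 : |dist UpperHalfPlane.I w₀| = |Real.arsinh (Real.cot θ)| := le_antisymm h1 h2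
    have h4 : 0 ≤ Real.arsinh (Real.cot θ) := by
      rw [Real.arsinh_nonneg_iff, hcot]; positivity
    rwa [abs_of_nonneg dist_nonneg, abs_of_nonneg h4] at h3
  -- lower bound for every point of the geodesic
  have hlb : ∀ w ∈ geodesicUHP t 0, Real.arsinh (Real.cot θ) ≤ dist UpperHalfPlane.I w := by
    intro w hw
    have hcoords := circle_coords ht hw
    have hy : 0 < w.im := w.im_pos
    set x := w.re
    set y := w.im
    have hx : 0 < x := by nlinarith [hcoords, hy, ht]
    -- key inequality : s * (t*x+1) ≥ 2*y
    have hts : t * c = s := by rw [htan]; field_simp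
    have hc2 : c ^ 2 * y ^ 2 = s * c * x - c ^ 2 * x ^ 2 := by
      linear_combination c ^ 2 * hcoords + c * x * hts
    have hsq : (s * (s * x + c)) ^ 2 - (2 * c * y) ^ 2 = ((1 + c ^ 2) * x - s * c) ^ 2 := by
      linear_combination (-4 : ℝ) * hc2 + (x ^ 2 * (s ^ 2 + 1 - c ^ 2) + 2 * s * c * x) * hsc
    have hA : 0 < s * (s * x + c) := by positivity
    have hAB : 0 < s * (s * x + c) + 2 * c * y := by positivity
    have hkey' : 2 * c * y ≤ s * (s * x + c) := by
      nlinarith [hsq, sq_nonneg ((1 + c ^ 2) * x - s * c), hAB]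
    have h5 : c * (s * (t * x + 1)) = s * (s * x + c) := by
      linear_combination s * x * hts
    have hkey : 2 * y ≤ s * (t * x + 1) := by
      have h6 : c * (2 * y) ≤ c * (s * (t * x + 1)) := by rw [h5]; linarith [hkey']
      exact le_of_mul_le_mul_left h6 hc
    have hcosh_ge : Real.cosh (Real.arsinh (Real.cot θ)) ≤
        Real.cosh (dist UpperHalfPlane.I w) := by
      rw [cosh_dist_mem ht hw, hcosh_r]
      rw [div_le_div_iff₀ hs (by positivity)]
      nlinarith [hkey]
    have h1 : |Real.arsinh (Real.cot θ)| ≤ |dist UpperHalfPlane.I w| :=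
      Real.cosh_le_cosh.mp hcosh_ge
    have h4 : 0 ≤ Real.arsinh (Real.cot θ) := by
      rw [Real.arsinh_nonneg_iff, hcot]; positivity
    rwa [abs_of_nonneg h4, abs_of_nonneg dist_nonneg] at h1
  -- conclude
  have hne : (geodesicUHP t 0).Nonempty := ⟨w₀, hw₀mem⟩
  refine le_antisymm ?_ ?_
  · calc D t 0 ≤ dist UpperHalfPlane.I w₀ := Metric.infDist_le_dist_of_mem hw₀mem
      _ = Real.arsinh (Real.cot θ) := hdist_w₀
  · by_contra h
    push_neg at h
    obtain ⟨w, hwmem, hwlt⟩ := (Metric.infDist_lt_iff hne).mp h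
    exact absurd (hlb w hwmem) (not_le.mpr hwlt)
end
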